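/- arXiv:2402.10538 — 3 statements merged into one kernel-verified Lean document; each statement's English description precedes it below -/
import Mathlib

section
/- Let f : ℝⁿ × ℝᵖ → ℝⁿ, let V : ℝⁿ → ℝ, and let a, b, c, d be positive reals with c ≤ b. Suppose that for all x ∈ ℝⁿ and w ∈ ℝᵖ: a‖x‖² ≤ V(x) ≤ b‖x‖² and V(f(x, w)) − V(x) ≤ −c‖x‖² + d‖w‖². Then every trajectory of x_{t+1} = f(x_t, w_t) satisfies, for all t ≥ 1, ‖x_t‖² ≤ (b/a)(1 − c/b)^t ‖x_0‖² + (d b)/(a c) · sup_{0 ≤ k < t} ‖w_k‖²; in particular, a quadratically bounded ISS Lyapunov function implies input-to-state stability of the origin with exponential decay rate. -/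
/-- If `V` is a quadratically bounded ISS Lyapunov function, i.e.
`a‖x‖² ≤ V x ≤ b‖x‖²` and `V (f x w) − V x ≤ −c‖x‖² + d‖w‖²` with
`0 < a, b, c, d` and `c ≤ b`, then every trajectory of `x (t+1) = f (x t) (w t)`
satisfies, for all `t ≥ 1`,
`‖x t‖² ≤ (b/a)(1 − c/b)^t ‖x 0‖² + (d b)/(a c) · sup_{0 ≤ k < t} ‖w k‖²`. -/
theorem quadratic_iss_lyapunov_implies_iss
    (n p : ℕ)
    (f : EuclideanSpace ℝ (Fin n) → EuclideanSpace ℝ (Fin p) →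
      EuclideanSpace ℝ (Fin n))
    (V : EuclideanSpace ℝ (Fin n) → ℝ)
    (a b c d : ℝ) (ha : 0 < a) (hb : 0 < b) (hc : 0 < c) (hd : 0 < d)
    (hcb : c ≤ b)
    (hlow : ∀ x, a * ‖x‖ ^ 2 ≤ V x)
    (hup : ∀ x, V x ≤ b * ‖x‖ ^ 2)
    (hdec : ∀ x w, V (f x w) - V x ≤ -c * ‖x‖ ^ 2 + d * ‖w‖ ^ 2)
    (x : ℕ → EuclideanSpace ℝ (Fin n)) (w : ℕ → EuclideanSpace ℝ (Fin p))
    (hx : ∀ t, x (t + 1) = f (x t) (w t)) :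
    ∀ t : ℕ, 1 ≤ t →
      ‖x t‖ ^ 2 ≤ (b / a) * (1 - c / b) ^ t * ‖x 0‖ ^ 2 +
        (d * b) / (a * c) * ⨆ k : Fin t, ‖w (k : ℕ)‖ ^ 2 := by
  obtain ⟨ρ, hρdef⟩ : ∃ ρ : ℝ, ρ = 1 - c / b := ⟨_, rfl⟩
  obtain ⟨M, hMdef⟩ : ∃ M : ℕ → ℝ, M = fun t => ⨆ k : Fin t, ‖w (k : ℕ)‖ ^ 2 :=
    ⟨_, rfl⟩
  have hρ0 : 0 ≤ ρ := by
    have h : c / b ≤ 1 := (div_le_one hb).mpr hcb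
    rw [hρdef]; linarith
  have hMle : ∀ (t : ℕ) (k : Fin t), ‖w (k : ℕ)‖ ^ 2 ≤ M t := by
    intro t k
    rw [hMdef]
    exact le_ciSup (f := fun k : Fin t => ‖w (k : ℕ)‖ ^ 2)
      (Set.Finite.bddAbove (Set.finite_range _)) k
  have hMnn : ∀ t : ℕ, 1 ≤ t → 0 ≤ M t := by
    intro t ht
    exact le_trans (sq_nonneg _) (hMle t ⟨0, ht⟩)
  have hMmono : ∀ t : ℕ, 1 ≤ t → M t ≤ M (t + 1) := by
    intro t ht
    have : Nonempty (Fin t) := ⟨⟨0, ht⟩⟩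
    rw [hMdef]
    refine ciSup_le fun k => ?_
    have := hMle (t + 1) ⟨(k : ℕ), Nat.lt_succ_of_lt k.2⟩
    rw [hMdef] at this
    simpa using this
  have hdbc : 0 ≤ d * b / c := by positivity
  have hstep : ∀ t : ℕ, V (x (t + 1)) ≤ ρ * V (x t) + d * ‖w t‖ ^ 2 := by
    intro t
    have h1 := hdec (x t) (w t)
    have h2 := hup (x t)
    rw [← hx t] at h1
    have h3 : c / b * V (x t) ≤ c * ‖x t‖ ^ 2 := by
      rw [div_mul_eq_mul_div, div_le_iff₀ hb]
      nlinarith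
    have h4 : ρ * V (x t) = V (x t) - c / b * V (x t) := by rw [hρdef]; ring
    linarith
  have key : ∀ t : ℕ, 1 ≤ t → V (x t) ≤ ρ ^ t * V (x 0) + (d * b / c) * M t := by
    intro t ht
    induction t, ht using Nat.le_induction with
    | base =>
      have h1 := hstep 0
      have h2 : ‖w 0‖ ^ 2 ≤ M 1 := hMle 1 ⟨0, Nat.zero_lt_one⟩
      have hdle : d ≤ d * b / c := by
        rw [le_div_iff₀ hc]; nlinarith
      have h3 : d * ‖w 0‖ ^ 2 ≤ (d * b / c) * M 1 := by
        calc d * ‖w 0‖ ^ 2 ≤ (d * b / c) * ‖w 0‖ ^ 2 :=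
              mul_le_mul_of_nonneg_right hdle (sq_nonneg _)
          _ ≤ (d * b / c) * M 1 := mul_le_mul_of_nonneg_left h2 hdbc
      calc V (x 1) ≤ ρ * V (x 0) + d * ‖w 0‖ ^ 2 := h1
        _ ≤ ρ ^ 1 * V (x 0) + (d * b / c) * M 1 := by rw [pow_one]; linarith
    | succ t ht ih =>
      have h1 := hstep t
      have hwt : ‖w t‖ ^ 2 ≤ M (t + 1) := hMle (t + 1) ⟨t, Nat.lt_succ_self t⟩
      have hmm := hMmono t ht
      have hV1 : ρ * V (x t) ≤ ρ * (ρ ^ t * V (x 0) + (d * b / c) * M t) :=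
        mul_le_mul_of_nonneg_left ih hρ0
      have h5 : ρ * (d * b / c) * M t ≤ ρ * (d * b / c) * M (t + 1) :=
        mul_le_mul_of_nonneg_left hmm (mul_nonneg hρ0 hdbc)
      have h6 : d * ‖w t‖ ^ 2 ≤ d * M (t + 1) :=
        mul_le_mul_of_nonneg_left hwt hd.le
      have hcb' : ρ * (d * b / c) + d = d * b / c := by
        rw [hρdef]; field_simp; ring
      calc V (x (t + 1)) ≤ ρ * V (x t) + d * ‖w t‖ ^ 2 := h1
        _ ≤ ρ * (ρ ^ t * V (x 0) + (d * b / c) * M t) + d * ‖w t‖ ^ 2 := by linarith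
        _ = ρ ^ (t + 1) * V (x 0) + ρ * (d * b / c) * M t + d * ‖w t‖ ^ 2 := by ring
        _ ≤ ρ ^ (t + 1) * V (x 0) + ρ * (d * b / c) * M (t + 1) + d * M (t + 1) := by
            linarith
        _ = ρ ^ (t + 1) * V (x 0) + (ρ * (d * b / c) + d) * M (t + 1) := by ring
        _ = ρ ^ (t + 1) * V (x 0) + (d * b / c) * M (t + 1) := by rw [hcb']
  intro t ht
  have hk := key t ht
  have hl := hlow (x t)
  have hu := hup (x 0)
  have hρt : (0:ℝ) ≤ ρ ^ t := pow_nonneg hρ0 t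
  have h0 : ρ ^ t * V (x 0) ≤ ρ ^ t * (b * ‖x 0‖ ^ 2) :=
    mul_le_mul_of_nonneg_left hu hρt
  have h1 : a * ‖x t‖ ^ 2 ≤ ρ ^ t * (b * ‖x 0‖ ^ 2) + (d * b / c) * M t := by
    linarith
  have h2 : ‖x t‖ ^ 2 ≤ (ρ ^ t * (b * ‖x 0‖ ^ 2) + (d * b / c) * M t) / a := by
    rw [le_div_iff₀ ha]; linarith
  have hMeq : (⨆ k : Fin t, ‖w (k : ℕ)‖ ^ 2) = M t := by rw [hMdef]
  rw [hMeq, show (1 - c / b) = ρ from hρdef.symm]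
  calc ‖x t‖ ^ 2 ≤ (ρ ^ t * (b * ‖x 0‖ ^ 2) + (d * b / c) * M t) / a := h2
    _ = (b / a) * ρ ^ t * ‖x 0‖ ^ 2 + (d * b) / (a * c) * M t := by
        field_simp
end

section
/- Let f : ℝⁿ × ℝᵖ → ℝⁿ be continuous, let Ω ⊆ ℝⁿ be such that f(x, w) ∈ Ω for all x ∈ Ω and all w ∈ W (robust positive invariance), and let V : Ω → ℝ be continuous. Suppose there exist class-K∞ functions α₁, α₂, α₃ and a class-K function γ such that for all x ∈ Ω and all w ∈ W: α₁(‖x‖) ≤ V(x) ≤ α₂(‖x‖) and V(f(x, w)) − V(x) ≤ −α₃(‖x‖) + γ(‖w‖). Then the origin of the system x_{t+1} = f(x_t, w_t) is input-to-state stable on Ω: there exist a class-KL function β and a class-K function σ such that every trajectory with x_0 ∈ Ω and w_t ∈ W for all t satisfies ‖x_t‖ ≤ β(‖x_0‖, t) + σ(sup_{0 ≤ k < t} ‖w_k‖) for all t ∈ ℕ. -/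
open Filter

/-- A function `α : [0,∞) → [0,∞)` is of class K if it is continuous, strictly
increasing, nonnegative on `[0,∞)`, and `α 0 = 0`. -/
def IsClassK (α : ℝ → ℝ) : Prop :=
  ContinuousOn α (Set.Ici 0) ∧ StrictMonoOn α (Set.Ici 0) ∧
    (∀ r ∈ Set.Ici (0 : ℝ), 0 ≤ α r) ∧ α 0 = 0

/-- A class-K function is of class K∞ if additionally `α r → ∞` as `r → ∞`. -/
def IsClassKInf (α : ℝ → ℝ) : Prop :=
  IsClassK α ∧ Tendsto α atTop atTop

/-- A function `β : [0,∞) × ℕ → [0,∞)` is of class KL if `β (·, t)` is of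
class K for each fixed `t` and, for each fixed `r ≥ 0`, `β (r, ·)` is
nonincreasing with `β (r, t) → 0` as `t → ∞`. -/
def IsClassKL (β : ℝ → ℕ → ℝ) : Prop :=
  (∀ t : ℕ, IsClassK (fun r => β r t)) ∧
    (∀ r ∈ Set.Ici (0 : ℝ),
      (Antitone fun t => β r t) ∧ Tendsto (fun t => β r t) atTop (nhds 0))

lemma classKInf_inverse (α : ℝ → ℝ) (h : IsClassKInf α) :
    ∃ ψ : ℝ → ℝ, Continuous ψ ∧ StrictMono ψ ∧ ψ 0 = 0 ∧
      (∀ r, 0 ≤ r → ψ (α r) = r) ∧ (∀ s, 0 ≤ s → 0 ≤ ψ s ∧ α (ψ s) = s) := by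
  obtain ⟨⟨hcont, hmono, hnonneg, h0⟩, htop⟩ := h
  set e : ℝ → ℝ := fun r => min r 0 + α (max r 0) with he
  have hce : Continuous e := by
    apply Continuous.add (continuous_id.min continuous_const)
    exact hcont.comp_continuous (continuous_id.max continuous_const)
      (fun x => le_max_right x 0)
  have heq : ∀ r, 0 ≤ r → e r = α r := by
    intro r hr; simp [he, min_eq_right hr, max_eq_left hr]
  have heq' : ∀ r, r ≤ 0 → e r = r := by
    intro r hr; simp [he, min_eq_left hr, max_eq_right hr, h0]
  have hme : StrictMono e := by
    intro a b hab
    rcases le_or_gt 0 a with ha | ha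
    · rw [heq a ha, heq b (ha.trans hab.le)]
      exact hmono ha (ha.trans hab.le) hab
    · rw [heq' a ha.le]
      have h1 : a < min b 0 := lt_min hab ha
      have h2 : (0:ℝ) ≤ α (max b 0) := hnonneg _ (le_max_right b 0)
      have h3 : e b = min b 0 + α (max b 0) := rfl
      rw [h3]; linarith
  have hsurj : Function.Surjective e := by
    apply hce.surjective
    · apply htop.congr' ((eventually_ge_atTop (0:ℝ)).mono fun r hr => (heq r hr).symm)
    · apply tendsto_id.congr' ((eventually_le_atBot (0:ℝ)).mono fun r hr => (heq' r hr).symm)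
  set E : ℝ ≃o ℝ := StrictMono.orderIsoOfSurjective e hme hsurj with hE
  have hEapp : ∀ r, E r = e r := fun r => rfl
  refine ⟨E.symm, E.symm.continuous, E.symm.strictMono, ?_, ?_, ?_⟩
  · have : e 0 = 0 := by rw [heq 0 le_rfl, h0]
    have := E.symm_apply_apply 0
    rw [hEapp, ‹e 0 = 0›] at this; exact this
  · intro r hr
    have := E.symm_apply_apply r
    rwa [hEapp, heq r hr] at this
  · intro s hs
    have h00 : E.symm 0 = 0 := by
      have : e 0 = 0 := by rw [heq 0 le_rfl, h0]
      have := E.symm_apply_apply 0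
      rwa [hEapp, ‹e 0 = 0›] at this
    have hns : 0 ≤ E.symm s := by
      rw [← h00]; exact E.symm.monotone hs
    refine ⟨hns, ?_⟩
    have := E.apply_symm_apply s
    rwa [hEapp, heq _ hns] at this

lemma contraction_of_posdef (g : ℝ → ℝ) (hg0 : g 0 = 0)
    (hgnonneg : ∀ s, 0 ≤ s → 0 ≤ g s) (hgpos : ∀ s, 0 < s → 0 < g s)
    (hgmono : MonotoneOn g (Set.Ici 0)) :
    ∃ ρ : ℝ → ℝ, Continuous ρ ∧ StrictMono ρ ∧ ρ 0 = 0 ∧ (∀ s, ρ s ≤ s) ∧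
      (∀ s, 0 ≤ s → s - g s / 2 ≤ ρ s) ∧ (∀ s, 0 ≤ s → 0 ≤ ρ s) ∧
      (∀ s, 0 ≤ s → Tendsto (fun t => ρ^[t] s) atTop (nhds 0)) := by
  set A : ℝ → ℝ := fun s => ⨅ r : Set.Ici (0:ℝ), (g r / 2 + |s - (r:ℝ)| / 2) with hA
  have hbdd : ∀ s, BddBelow (Set.range fun r : Set.Ici (0:ℝ) => g r / 2 + |s - (r:ℝ)| / 2) := by
    intro s
    refine ⟨0, ?_⟩
    rintro y ⟨r, rfl⟩
    have := hgnonneg r r.2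
    have := abs_nonneg (s - (r:ℝ))
    positivity
  have hAnonneg : ∀ s, 0 ≤ A s := by
    intro s
    apply le_ciInf
    intro r
    have := hgnonneg r r.2
    have := abs_nonneg (s - (r:ℝ))
    positivity
  have hAle : ∀ s, 0 ≤ s → A s ≤ g s / 2 := by
    intro s hs
    have := ciInf_le (hbdd s) (⟨s, hs⟩ : Set.Ici (0:ℝ))
    simpa using this
  have hAlip : ∀ s t : ℝ, A s ≤ A t + |s - t| / 2 := by
    intro s t
    have key : ∀ r : Set.Ici (0:ℝ), A s - |s - t| / 2 ≤ g r / 2 + |t - (r:ℝ)| / 2 := by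
      intro r
      have h1 : A s ≤ g r / 2 + |s - (r:ℝ)| / 2 := ciInf_le (hbdd s) r
      have h2 : |s - (r:ℝ)| ≤ |s - t| + |t - (r:ℝ)| := abs_sub_le s t r
      linarith
    have h3 : A s - |s - t| / 2 ≤ A t := le_ciInf key
    linarith
  have hA0 : A 0 = 0 := le_antisymm (by simpa [hg0] using hAle 0 le_rfl) (hAnonneg 0)
  have hApos : ∀ s, 0 < s → 0 < A s := by
    intro s hs
    have key : ∀ r : Set.Ici (0:ℝ), min (g (s/2) / 2) (s/4) ≤ g r / 2 + |s - (r:ℝ)| / 2 := by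
      intro r
      rcases le_or_gt (s/2) (r:ℝ) with hr | hr
      · have h1 : g (s/2) ≤ g r := hgmono (by positivity : (0:ℝ) ≤ s/2) r.2 hr
        have := abs_nonneg (s - (r:ℝ))
        calc min (g (s/2) / 2) (s/4) ≤ g (s/2) / 2 := min_le_left _ _
          _ ≤ g r / 2 + |s - (r:ℝ)| / 2 := by linarith
      · have h1 : s / 2 ≤ |s - (r:ℝ)| := by
          rw [abs_of_nonneg (by linarith : (0:ℝ) ≤ s - (r:ℝ))]; linarith
        have h2 := hgnonneg r r.2
        calc min (g (s/2) / 2) (s/4) ≤ s/4 := min_le_right _ _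
          _ ≤ g r / 2 + |s - (r:ℝ)| / 2 := by linarith
    have hmin : min (g (s/2) / 2) (s/4) ≤ A s := le_ciInf key
    have : 0 < min (g (s/2) / 2) (s/4) :=
      lt_min (by have := hgpos (s/2) (by positivity); positivity) (by positivity)
    linarith
  have hAcont : Continuous A := by
    have : LipschitzWith 1 A := by
      apply LipschitzWith.of_dist_le_mul
      intro s t
      rw [Real.dist_eq, Real.dist_eq]
      have h1 := hAlip s t
      have h2 := hAlip t s
      rw [abs_sub_comm t s] at h2
      rw [abs_sub_le_iff]
      simp only [NNReal.coe_one, one_mul]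
      constructor <;> linarith [abs_nonneg (s - t)]
    exact this.continuous
  set ρ : ℝ → ℝ := fun s => s - A s with hρ
  have hρcont : Continuous ρ := by rw [hρ]; continuity
  have hρmono : StrictMono ρ := by
    intro a b hab
    have h1 := hAlip b a
    have h2 : |b - a| = b - a := abs_of_pos (by linarith)
    rw [h2] at h1
    show a - A a < b - A b
    linarith
  have hρ0 : ρ 0 = 0 := by show (0:ℝ) - A 0 = 0; rw [hA0]; ring
  have hρle : ∀ s, ρ s ≤ s := fun s => by show s - A s ≤ s; linarith [hAnonneg s]
  have hρhalf : ∀ s, 0 ≤ s → s - g s / 2 ≤ ρ s := fun s hs => by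
    show s - g s / 2 ≤ s - A s; linarith [hAle s hs]
  have hρnn : ∀ s, 0 ≤ s → 0 ≤ ρ s := fun s hs => hρ0 ▸ hρmono.monotone hs
  refine ⟨ρ, hρcont, hρmono, hρ0, hρle, hρhalf, hρnn, ?_⟩
  intro s hs
  set u : ℕ → ℝ := fun t => ρ^[t] s with hu
  have hu_succ : ∀ t, u (t+1) = ρ (u t) := fun t => Function.iterate_succ_apply' ρ t s
  have hu_nn : ∀ t, 0 ≤ u t := by
    intro t; induction t with
    | zero => exact hs
    | succ k ih => rw [hu_succ]; exact hρnn _ ih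
  have hu_anti : Antitone u := antitone_nat_of_succ_le fun t => by
    rw [hu_succ]; exact hρle _
  have hbb : BddBelow (Set.range u) := ⟨0, by rintro y ⟨t, rfl⟩; exact hu_nn t⟩
  have hconv : Tendsto u atTop (nhds (⨅ t, u t)) := tendsto_atTop_ciInf hu_anti hbb
  set L := ⨅ t, u t with hL
  have hLnn : 0 ≤ L := le_ciInf hu_nn
  have h1 : Tendsto (fun t => u (t+1)) atTop (nhds L) :=
    hconv.comp (tendsto_add_atTop_nat 1)
  have h2 : Tendsto (fun t => ρ (u t)) atTop (nhds (ρ L)) :=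
    (hρcont.tendsto L).comp hconv
  have hfix : ρ L = L :=
    tendsto_nhds_unique (h2.congr fun t => (hu_succ t).symm) h1
  have hAL : A L = 0 := by
    have : L - A L = L := hfix
    linarith
  have hL0 : L = 0 := by
    rcases hLnn.lt_or_eq with h | h
    · exact absurd hAL (ne_of_gt (hApos L h))
    · exact h.symm
  rw [hL0] at hconv
  exact hconv

/-- Existence of a continuous ISS Lyapunov function on a robust
positively invariant set `Ω` implies that the origin of
`x (t+1) = f (x t) (w t)` is input-to-state stable on `Ω`: there exist
`β ∈ KL` and `σ ∈ K` such that every trajectory with `x 0 ∈ Ω` and `w t ∈ W`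
satisfies `‖x t‖ ≤ β ‖x 0‖ t + σ (sup_{0 ≤ k < t} ‖w k‖)` for all `t`. -/
theorem iss_lyapunov_implies_iss
    (n p : ℕ)
    (f : EuclideanSpace ℝ (Fin n) × EuclideanSpace ℝ (Fin p) →
      EuclideanSpace ℝ (Fin n))
    (hf : Continuous f)
    (Ω : Set (EuclideanSpace ℝ (Fin n))) (W : Set (EuclideanSpace ℝ (Fin p)))
    (hinv : ∀ x ∈ Ω, ∀ w ∈ W, f (x, w) ∈ Ω)
    (V : EuclideanSpace ℝ (Fin n) → ℝ) (hV : ContinuousOn V Ω)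
    (α₁ α₂ α₃ γ : ℝ → ℝ)
    (hα₁ : IsClassKInf α₁) (hα₂ : IsClassKInf α₂) (hα₃ : IsClassKInf α₃)
    (hγ : IsClassK γ)
    (hbound : ∀ x ∈ Ω, α₁ ‖x‖ ≤ V x ∧ V x ≤ α₂ ‖x‖)
    (hdec : ∀ x ∈ Ω, ∀ w ∈ W, V (f (x, w)) - V x ≤ -α₃ ‖x‖ + γ ‖w‖) :
    ∃ β : ℝ → ℕ → ℝ, ∃ σ : ℝ → ℝ, IsClassKL β ∧ IsClassK σ ∧
      ∀ (x : ℕ → EuclideanSpace ℝ (Fin n))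
        (w : ℕ → EuclideanSpace ℝ (Fin p)),
        x 0 ∈ Ω → (∀ t, w t ∈ W) →
        (∀ t, x (t + 1) = f (x t, w t)) →
        ∀ t : ℕ, ‖x t‖ ≤ β ‖x 0‖ t + σ (⨆ k : Fin t, ‖w (k : ℕ)‖) := by
  obtain ⟨ψ₁, hψ₁⟩ := classKInf_inverse α₁ hα₁
  obtain ⟨ψ₂, hψ₂⟩ := classKInf_inverse α₂ hα₂
  obtain ⟨ψ₃, hψ₃⟩ := classKInf_inverse α₃ hα₃
  obtain ⟨ρ, hρc, hρm, hρ0, hρle, hρhalf0, hρnn, hρlim⟩ :=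
    contraction_of_posdef (fun s => α₃ (ψ₂ s))
      (by show α₃ (ψ₂ 0) = 0; rw [hψ₂.2.2.1, hα₃.1.2.2.2])
      (fun s hs => hα₃.1.2.2.1 _ (hψ₂.2.2.2.2 s hs).1)
      (fun s hs => by
        show 0 < α₃ (ψ₂ s)
        have h1 : (0:ℝ) < ψ₂ s := by
          have := hψ₂.2.1 hs
          rwa [hψ₂.2.2.1] at this
        have := hα₃.1.2.1 (le_refl (0:ℝ)) h1.le h1
        rwa [hα₃.1.2.2.2] at this)
      (fun a ha b hb hab => hα₃.1.2.1.monotoneOn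
        (hψ₂.2.2.2.2 a ha).1 (hψ₂.2.2.2.2 b hb).1 (hψ₂.2.1.monotone hab))
  have hρ : Continuous ρ ∧ StrictMono ρ ∧ ρ 0 = 0 ∧ (∀ s, ρ s ≤ s) ∧
      (∀ s, 0 ≤ s → s - (α₃ (ψ₂ s)) / 2 ≤ ρ s) ∧ (∀ s, 0 ≤ s → 0 ≤ ρ s) ∧
      (∀ s, 0 ≤ s → Tendsto (fun t => ρ^[t] s) atTop (nhds 0)) :=
    ⟨hρc, hρm, hρ0, hρle, hρhalf0, hρnn, hρlim⟩
  clear hρc hρm hρ0 hρle hρhalf0 hρnn hρlim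
  obtain ⟨hψ₁c, hψ₁m, hψ₁0, hψ₁l, hψ₁r⟩ := hψ₁
  obtain ⟨hψ₂c, hψ₂m, hψ₂0, hψ₂l, hψ₂r⟩ := hψ₂
  obtain ⟨hψ₃c, hψ₃m, hψ₃0, hψ₃l, hψ₃r⟩ := hψ₃
  obtain ⟨hρc, hρm, hρ0, hρle, hρhalf, hρnn, hρlim⟩ := hρ
  obtain ⟨⟨hα₁c, hα₁m, hα₁n, hα₁0⟩, -⟩ := hα₁
  obtain ⟨⟨hα₂c, hα₂m, hα₂n, hα₂0⟩, -⟩ := hα₂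
  obtain ⟨⟨hα₃c, hα₃m, hα₃n, hα₃0⟩, -⟩ := hα₃
  obtain ⟨hγc, hγm, hγn, hγ0⟩ := hγ
  have hItnn : ∀ (t : ℕ) (s : ℝ), 0 ≤ s → 0 ≤ ρ^[t] s := by
    intro t
    induction t with
    | zero => intro s hs; simpa using hs
    | succ k ih =>
      intro s hs
      rw [Function.iterate_succ_apply']
      exact hρnn _ (ih s hs)
  set D : ℝ → ℝ := fun μ => α₂ (ψ₃ (2 * γ μ)) + γ μ with hD
  set β : ℝ → ℕ → ℝ := fun r t => ψ₁ (ρ^[t] (α₂ r)) with hβ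
  set σ : ℝ → ℝ := fun s => ψ₁ (D s) with hσ
  have hDnn : ∀ μ, 0 ≤ μ → 0 ≤ D μ := by
    intro μ hμ
    have h1 : 0 ≤ γ μ := hγn μ hμ
    have h2 : 0 ≤ ψ₃ (2 * γ μ) := (hψ₃r _ (by linarith)).1
    have h3 : 0 ≤ α₂ (ψ₃ (2 * γ μ)) := hα₂n _ h2
    show 0 ≤ α₂ (ψ₃ (2 * γ μ)) + γ μ
    linarith
  refine ⟨β, σ, ⟨?_, ?_⟩, ⟨?_, ?_, ?_, ?_⟩, ?_⟩
  · -- each t : class K in r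
    intro t
    refine ⟨?_, ?_, ?_, ?_⟩
    · exact (hψ₁c.comp (hρc.iterate t)).comp_continuousOn hα₂c
    · intro a ha b hb hab
      exact hψ₁m ((hρm.iterate t) (hα₂m ha hb hab))
    · intro r hr
      exact (hψ₁r _ (hItnn t _ (hα₂n r hr))).1
    · show ψ₁ (ρ^[t] (α₂ 0)) = 0
      rw [hα₂0, Function.iterate_fixed hρ0, hψ₁0]
  · -- antitone and tendsto in t
    intro r hr
    constructor
    · apply antitone_nat_of_succ_le
      intro t
      apply hψ₁m.monotone
      rw [Function.iterate_succ_apply']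
      exact hρle _
    · have h1 := hρlim (α₂ r) (hα₂n r hr)
      have h2 := (hψ₁c.tendsto 0).comp h1
      rw [hψ₁0] at h2
      exact h2
  · -- σ continuous
    have hinner : ContinuousOn (fun s => α₂ (ψ₃ (2 * γ s)) + γ s) (Set.Ici 0) := by
      apply ContinuousOn.add _ hγc
      apply ContinuousOn.comp hα₂c
      · exact hψ₃c.comp_continuousOn (continuousOn_const.mul hγc)
      · intro s hs
        exact (hψ₃r _ (by have := hγn s hs; linarith)).1
    exact hψ₁c.comp_continuousOn hinner
  · -- σ strict mono
    intro a ha b hb hab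
    apply hψ₁m
    have h1 : γ a < γ b := hγm ha hb hab
    have h2 : ψ₃ (2 * γ a) < ψ₃ (2 * γ b) := hψ₃m (by linarith)
    have h3 : α₂ (ψ₃ (2 * γ a)) < α₂ (ψ₃ (2 * γ b)) :=
      hα₂m (hψ₃r _ (by have := hγn a ha; linarith)).1
        (hψ₃r _ (by have := hγn b hb; linarith)).1 h2
    show α₂ (ψ₃ (2 * γ a)) + γ a < α₂ (ψ₃ (2 * γ b)) + γ b
    linarith
  · -- σ nonneg
    intro s hs
    exact (hψ₁r _ (hDnn s hs)).1
  · -- σ 0 = 0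
    show ψ₁ (α₂ (ψ₃ (2 * γ 0)) + γ 0) = 0
    rw [hγ0, mul_zero, hψ₃0, hα₂0, add_zero, hψ₁0]
  · -- main trajectory bound
    intro x w hx0 hw hstep
    set M : ℕ → ℝ := fun t => ⨆ k : Fin t, ‖w (k : ℕ)‖ with hM
    have hbddW : ∀ t : ℕ, BddAbove (Set.range fun k : Fin t => ‖w (k : ℕ)‖) :=
      fun t => (Set.finite_range _).bddAbove
    have hwle : ∀ t k, k < t → ‖w k‖ ≤ M t := fun t k hk => le_ciSup (hbddW t) ⟨k, hk⟩
    have hM0 : M 0 = 0 := Real.iSup_of_isEmpty _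
    have hMnn : ∀ t, 0 ≤ M t := by
      intro t
      cases t with
      | zero => rw [hM0]
      | succ k => exact (norm_nonneg _).trans (hwle _ 0 (Nat.succ_pos k))
    have hMmono : Monotone M := by
      intro a b hab
      cases a with
      | zero => rw [hM0]; exact hMnn b
      | succ k => exact ciSup_le fun j => hwle b j (lt_of_lt_of_le j.2 hab)
    have hΩ : ∀ t, x t ∈ Ω := by
      intro t
      induction t with
      | zero => exact hx0
      | succ k ih => rw [hstep k]; exact hinv _ ih _ (hw k)
    have hVnn : ∀ t, 0 ≤ V (x t) :=
      fun t => le_trans (hα₁n _ (norm_nonneg _)) (hbound _ (hΩ t)).1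
    have hDmono : ∀ a b : ℕ, a ≤ b → D (M a) ≤ D (M b) := by
      intro a b hab
      have h1 : γ (M a) ≤ γ (M b) := hγm.monotoneOn (hMnn a) (hMnn b) (hMmono hab)
      have hna : 0 ≤ γ (M a) := hγn _ (hMnn a)
      have h2 : ψ₃ (2 * γ (M a)) ≤ ψ₃ (2 * γ (M b)) := hψ₃m.monotone (by linarith)
      have h3 : α₂ (ψ₃ (2 * γ (M a))) ≤ α₂ (ψ₃ (2 * γ (M b))) :=
        hα₂m.monotoneOn (hψ₃r _ (by linarith)).1 (hψ₃r _ (by linarith)).1 h2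
      show α₂ (ψ₃ (2 * γ (M a))) + γ (M a) ≤ α₂ (ψ₃ (2 * γ (M b))) + γ (M b)
      linarith
    have hkey : ∀ t, V (x t) ≤ max (ρ^[t] (V (x 0))) (D (M t)) := by
      intro t
      induction t with
      | zero => simpa using le_max_left (V (x 0)) (D (M 0))
      | succ t ih =>
        have hμnn := hMnn (t + 1)
        have hγμnn : 0 ≤ γ (M (t + 1)) := hγn _ hμnn
        have hwt : ‖w t‖ ≤ M (t + 1) := hwle (t + 1) t (Nat.lt_succ_self t)
        have hγwt : γ ‖w t‖ ≤ γ (M (t + 1)) :=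
          hγm.monotoneOn (norm_nonneg _) hμnn hwt
        have hΩt := hΩ t
        have hdect := hdec (x t) hΩt (w t) (hw t)
        have hVx : V (x (t + 1)) ≤ V (x t) - α₃ ‖x t‖ + γ (M (t + 1)) := by
          rw [hstep t]; linarith
        have hVt_nn := hVnn t
        have hψ₂V : ψ₂ (V (x t)) ≤ ‖x t‖ := by
          have h := hψ₂m.monotone (hbound _ hΩt).2
          rwa [hψ₂l _ (norm_nonneg _)] at h
        have hψ₂Vnn : 0 ≤ ψ₂ (V (x t)) := (hψ₂r _ hVt_nn).1
        have hα₃ge : α₃ (ψ₂ (V (x t))) ≤ α₃ ‖x t‖ :=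
          hα₃m.monotoneOn hψ₂Vnn (norm_nonneg _) hψ₂V
        rcases le_or_gt (α₃ (ψ₂ (V (x t)))) (2 * γ (M (t + 1))) with hcase | hcase
        · have h1 : ψ₂ (V (x t)) ≤ ψ₃ (2 * γ (M (t + 1))) := by
            have h := hψ₃m.monotone hcase
            rwa [hψ₃l _ hψ₂Vnn] at h
          have h2 : V (x t) ≤ α₂ (ψ₃ (2 * γ (M (t + 1)))) := by
            have h := hα₂m.monotoneOn hψ₂Vnn
              ((hψ₃r _ (by linarith)).1) h1
            rwa [(hψ₂r _ hVt_nn).2] at h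
          have hα₃nn : 0 ≤ α₃ ‖x t‖ := hα₃n _ (norm_nonneg _)
          apply le_max_of_le_right
          show V (x (t + 1)) ≤ α₂ (ψ₃ (2 * γ (M (t + 1)))) + γ (M (t + 1))
          linarith
        · have hVsucc : V (x (t + 1)) ≤ ρ (V (x t)) := by
            have h := hρhalf (V (x t)) hVt_nn
            linarith
          rcases le_max_iff.mp ih with h | h
          · apply le_max_of_le_left
            calc V (x (t + 1)) ≤ ρ (V (x t)) := hVsucc
              _ ≤ ρ (ρ^[t] (V (x 0))) := hρm.monotone h
              _ = ρ^[t + 1] (V (x 0)) := (Function.iterate_succ_apply' ρ t _).symm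
          · apply le_max_of_le_right
            calc V (x (t + 1)) ≤ ρ (V (x t)) := hVsucc
              _ ≤ V (x t) := hρle _
              _ ≤ D (M t) := h
              _ ≤ D (M (t + 1)) := hDmono t (t + 1) (Nat.le_succ t)
    intro t
    have h1 : ‖x t‖ ≤ ψ₁ (V (x t)) := by
      have h := hψ₁m.monotone (hbound _ (hΩ t)).1
      rwa [hψ₁l _ (norm_nonneg _)] at h
    have h3 : ψ₁ (V (x t)) ≤ max (ψ₁ (ρ^[t] (V (x 0)))) (ψ₁ (D (M t))) := by
      rw [← hψ₁m.monotone.map_max]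
      exact hψ₁m.monotone (hkey t)
    have h4 : ψ₁ (ρ^[t] (V (x 0))) ≤ β ‖x 0‖ t := by
      apply hψ₁m.monotone
      exact (hρm.iterate t).monotone (hbound _ hx0).2
    have hβnn : 0 ≤ β ‖x 0‖ t :=
      (hψ₁r _ (hItnn t _ (hα₂n _ (norm_nonneg _)))).1
    have hσnn : 0 ≤ σ (M t) := (hψ₁r _ (hDnn _ (hMnn t))).1
    have h5 : σ (M t) = ψ₁ (D (M t)) := rfl
    show ‖x t‖ ≤ β ‖x 0‖ t + σ (M t)
    rcases max_cases (ψ₁ (ρ^[t] (V (x 0)))) (ψ₁ (D (M t))) with ⟨he, -⟩ | ⟨he, -⟩ <;>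
      rw [he] at h3 <;> linarith
end

section
/- Let A ∈ ℝⁿˣⁿ, B ∈ ℝⁿˣᵐ, K ∈ ℝᵐˣⁿ, and let P, Q ∈ ℝⁿˣⁿ and R ∈ ℝᵐˣᵐ be symmetric matrices satisfying the closed-loop identity (A − BK)ᵀ P (A − BK) + KᵀRK + Q = P. Fix N ≥ 1, an initial state x_0 ∈ ℝⁿ and inputs u_0, …, u_{N−1} ∈ ℝᵐ, and let the nominal predicted states be x_{k+1} = A x_k + B u_k. Define the cost J = Σ_{k=0}^{N−1} (x_kᵀ Q x_k + u_kᵀ R u_k) + x_Nᵀ P x_N. Then the shifted candidate input sequence ũ_k = u_{k+1} for k = 0, …, N−2 and ũ_{N−1} = −K x_N, applied from the initial state x_1, has cost J̃ satisfying J̃ = J − (x_0ᵀ Q x_0 + u_0ᵀ R u_0); that is, the MPC value along the shifted candidate solution decreases exactly by the first stage cost. -/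
open Matrix Finset

lemma quad_conj {a b : ℕ} (M : Matrix (Fin a) (Fin b) ℝ)
    (P : Matrix (Fin a) (Fin a) ℝ) (v : Fin b → ℝ) :
    (M.mulVec v) ⬝ᵥ P.mulVec (M.mulVec v) = v ⬝ᵥ (Mᵀ * P * M).mulVec v := by
  rw [← Matrix.mulVec_mulVec, ← Matrix.mulVec_mulVec,
    Matrix.dotProduct_mulVec v Mᵀ, Matrix.vecMul_transpose]

/-- Suppose the closed-loop identity
`(A − BK)ᵀ P (A − BK) + KᵀRK + Q = P` holds. Fix `N ≥ 1`, an initial state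
`x 0` and inputs `u 0, …, u (N−1)`, with nominal predicted states
`x (k+1) = A (x k) + B (u k)` and cost
`J = Σ_{k<N} (x kᵀ Q x k + u kᵀ R u k) + x Nᵀ P x N`.
Then the shifted candidate sequence `ũ k = u (k+1)` for `k < N−1`,
`ũ (N−1) = −K (x N)`, applied from `x 1` (predicted states `z`), has cost
`J̃ = J − (x 0ᵀ Q x 0 + u 0ᵀ R u 0)`. -/
theorem shifted_candidate_cost_decrease
    (n m : ℕ)
    (A : Matrix (Fin n) (Fin n) ℝ) (B : Matrix (Fin n) (Fin m) ℝ)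
    (K : Matrix (Fin m) (Fin n) ℝ)
    (P Q : Matrix (Fin n) (Fin n) ℝ) (R : Matrix (Fin m) (Fin m) ℝ)
    (hP : P.transpose = P) (hQ : Q.transpose = Q) (hR : R.transpose = R)
    (hlyap : (A - B * K).transpose * P * (A - B * K) +
      K.transpose * R * K + Q = P)
    (N : ℕ) (hN : 1 ≤ N)
    (x : ℕ → (Fin n → ℝ)) (u : ℕ → (Fin m → ℝ))
    (hx : ∀ k, x (k + 1) = A.mulVec (x k) + B.mulVec (u k))
    (util : ℕ → (Fin m → ℝ))
    (hu1 : ∀ k, k < N - 1 → util k = u (k + 1))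
    (hu2 : util (N - 1) = -(K.mulVec (x N)))
    (z : ℕ → (Fin n → ℝ))
    (hz0 : z 0 = x 1)
    (hz : ∀ k, z (k + 1) = A.mulVec (z k) + B.mulVec (util k)) :
    (∑ k ∈ Finset.range N,
        (z k ⬝ᵥ Q.mulVec (z k) + util k ⬝ᵥ R.mulVec (util k))) +
        z N ⬝ᵥ P.mulVec (z N) =
      ((∑ k ∈ Finset.range N,
          (x k ⬝ᵥ Q.mulVec (x k) + u k ⬝ᵥ R.mulVec (u k))) +
          x N ⬝ᵥ P.mulVec (x N)) -
        (x 0 ⬝ᵥ Q.mulVec (x 0) + u 0 ⬝ᵥ R.mulVec (u 0)) := by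
  obtain ⟨M, rfl⟩ : ∃ M, N = M + 1 := ⟨N - 1, (Nat.succ_pred_eq_of_pos hN).symm⟩
  simp only [Nat.add_sub_cancel] at hu1 hu2
  -- z k = x (k+1) for k ≤ M
  have hzx : ∀ k, k ≤ M → z k = x (k + 1) := by
    intro k hk
    induction k with
    | zero => exact hz0
    | succ k ih =>
      rw [hz, ih (Nat.le_of_succ_le hk), hu1 k hk, ← hx]
  have hzM : z M = x (M + 1) := hzx M le_rfl
  have hzN : z (M + 1) = (A - B * K).mulVec (x (M + 1)) := by
    rw [hz, hzM, hu2, Matrix.sub_mulVec, Matrix.mulVec_neg, ← Matrix.mulVec_mulVec]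
    abel
  rw [Finset.sum_range_succ, Finset.sum_range_succ' (fun k => x k ⬝ᵥ Q.mulVec (x k) + u k ⬝ᵥ R.mulVec (u k)) M]
  have hsum : ∀ k ∈ Finset.range M,
      z k ⬝ᵥ Q.mulVec (z k) + util k ⬝ᵥ R.mulVec (util k) =
      x (k + 1) ⬝ᵥ Q.mulVec (x (k + 1)) + u (k + 1) ⬝ᵥ R.mulVec (u (k + 1)) := by
    intro k hk
    rw [hzx k (le_of_lt (Finset.mem_range.mp hk)), hu1 k (Finset.mem_range.mp hk)]
  rw [Finset.sum_congr rfl hsum]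
  have key : z M ⬝ᵥ Q.mulVec (z M) + util M ⬝ᵥ R.mulVec (util M) +
      z (M + 1) ⬝ᵥ P.mulVec (z (M + 1)) = x (M + 1) ⬝ᵥ P.mulVec (x (M + 1)) := by
    rw [hzM, hu2, hzN, quad_conj, Matrix.mulVec_neg, neg_dotProduct,
      dotProduct_neg, neg_neg, quad_conj]
    conv_rhs => rw [← hlyap]
    simp [Matrix.add_mulVec, dotProduct_add]
    ring
  linarith [key]
end
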